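/- arXiv:2505.11039 — 5 statements merged into one kernel-verified Lean document; each statement's English description precedes it below -/
import Mathlib

section
/- Let c : I → R² be a unit-speed plane curve with nonvanishing curvature k, and suppose there is a constant λ ≠ 0 such that the functions u = λ k^(-1/(n-1)) and v = (λ/(n-2)) k^((n-2)/(n-1)) satisfy u̇² + v² = 1 (with n ≥ 3 an integer). Then k satisfies the ODE k̇² + ((n-1)/(n-2))² k⁴ - ((n-1)/λ)² k^(2n/(n-1)) = 0. -/
open Real
open scoped RealInnerProductSpace

/-!
STATEMENT 5.  If `c` is a unit-speed plane curve with nonvanishing (positive)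
curvature `k`, and `u = λ k^{-1/(n-1)}`, `v = (λ/(n-2)) k^{(n-2)/(n-1)}`
satisfy `u̇² + v² = 1`, then `k` satisfies
`k̇² + ((n-1)/(n-2))² k⁴ - ((n-1)/λ)² k^{2n/(n-1)} = 0`.
-/
theorem stmt5 (n : ℕ) (hn : 3 ≤ n) (lam : ℝ) (hlam : lam ≠ 0)
    (c N₁ : ℝ → EuclideanSpace ℝ (Fin 2)) (k u v : ℝ → ℝ)
    (hc : ∀ s, ‖deriv c s‖ = 1)
    (hfrenet : ∀ s, deriv (deriv c) s = k s • N₁ s)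
    (hN₁ : ∀ s, ‖N₁ s‖ = 1)
    (hk : ∀ s, 0 < k s)
    (hksmooth : ContDiff ℝ (⊤ : ℕ∞) k)
    (hu : ∀ s, u s = lam * (k s) ^ (-(1:ℝ)/((n:ℝ)-1)))
    (hv : ∀ s, v s = (lam/((n:ℝ)-2)) * (k s) ^ (((n:ℝ)-2)/((n:ℝ)-1)))
    (huv : ∀ s, (deriv u s)^2 + (v s)^2 = 1) :
    ∀ s, (deriv k s)^2 + (((n:ℝ)-1)/((n:ℝ)-2))^2 * (k s)^4
        - (((n:ℝ)-1)/lam)^2 * (k s) ^ ((2*(n:ℝ))/((n:ℝ)-1)) = 0 := by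
  intro s
  have hn3 : (3:ℝ) ≤ (n:ℝ) := by exact_mod_cast hn
  have hm1 : (n:ℝ) - 1 ≠ 0 := by linarith
  have hm2 : (n:ℝ) - 2 ≠ 0 := by linarith
  have hK := hk s
  have hKne := hK.ne'
  have hdk : HasDerivAt k (deriv k s) s :=
    ((hksmooth.differentiable (by simp)) s).hasDerivAt
  have hufun : u = fun t => lam * (k t) ^ (-(1:ℝ)/((n:ℝ)-1)) := funext hu
  have hdu : HasDerivAt u
      (lam * (deriv k s * (-(1:ℝ)/((n:ℝ)-1)) * k s ^ (-(1:ℝ)/((n:ℝ)-1) - 1))) s := by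
    rw [hufun]
    exact (hdk.rpow_const (Or.inl hKne)).const_mul lam
  have heq := huv s
  rw [hdu.deriv, hv s] at heq
  set m := (n:ℝ) with hm
  set A := deriv k s
  set K := k s
  have h1 : (K ^ ((-1:ℝ)/(m-1) - 1))^2 * K ^ (2*m/(m-1)) = 1 := by
    rw [← Real.rpow_natCast (K ^ ((-1:ℝ)/(m-1) - 1)) 2, ← Real.rpow_mul hK.le,
      ← Real.rpow_add hK]
    rw [show ((-1:ℝ)/(m-1) - 1) * ((2:ℕ):ℝ) + 2*m/(m-1) = 0 by
      push_cast; field_simp; ring]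
    exact Real.rpow_zero _
  have h2 : (K ^ ((m-2)/(m-1)))^2 * K ^ (2*m/(m-1)) = K^4 := by
    rw [← Real.rpow_natCast (K ^ ((m-2)/(m-1))) 2, ← Real.rpow_mul hK.le,
      ← Real.rpow_add hK]
    rw [show ((m-2)/(m-1)) * ((2:ℕ):ℝ) + 2*m/(m-1) = ((4:ℕ):ℝ) by
      push_cast; field_simp; ring]
    exact Real.rpow_natCast _ 4
  have hneg : (-(1:ℝ)/(m-1)) = (-1:ℝ)/(m-1) := by ring
  rw [hneg] at heq
  set Q := K ^ ((-1:ℝ)/(m-1) - 1)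
  set R := K ^ ((m-2)/(m-1))
  set P := K ^ (2*m/(m-1))
  have goal : A^2 + ((m-1)/(m-2))^2 * K^4 - ((m-1)/lam)^2 * P = 0 := by
    field_simp at heq ⊢
    linear_combination P * heq - lam^2*A^2*(m-2)^2 * h1 - lam^2*(m-1)^2 * h2
  exact goal
end

section
/- Let c : I → R² be a unit-speed plane curve with curvature k > 0 and unit normal N₁, and suppose k is a nonconstant solution of k̇² + ((n-1)/(n-2))² k⁴ - ((n-1)/λ)² k^(2n/(n-1)) = 0 for some constant λ ≠ 0 and integer n ≥ 3. Define u = λ k^(-1/(n-1)) and v = (λ/(n-2)) k^((n-2)/(n-1)). Then the vector field e = u̇ ċ + v N₁ along c is constant, has unit length, and satisfies ⟨c, e⟩ = u (up to translating c), so that k · ⟨c,e⟩ = (n-2) v = (n-2) ⟨e, N₁⟩. -/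
open Real
open scoped RealInnerProductSpace


lemma stmt6_chain (k F F' : ℝ → ℝ) (hk : ∀ s, 0 < k s)
    (hkd : Differentiable ℝ k) (hk'd : Differentiable ℝ (deriv k))
    (hodeF : ∀ s, (deriv k s)^2 = F (k s))
    (hFd : ∀ x, 0 < x → HasDerivAt F (F' x) x)
    (t : ℝ) (ht : deriv k t ≠ 0) :
    deriv (deriv k) t = F' (k t) / 2 := by
  have hg : (fun s => (deriv k s)^2 - F (k s)) = fun _ => (0:ℝ) := by
    funext s; simp [hodeF s]
  have h1 : HasDerivAt (fun s => (deriv k s)^2 - F (k s))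
      (2 * deriv k t * deriv (deriv k) t - F' (k t) * deriv k t) t := by
    have ha : HasDerivAt (fun s => (deriv k s)^2)
        (2 * deriv k t * deriv (deriv k) t) t := by
      have := ((hk'd t).hasDerivAt).fun_pow 2
      refine this.congr_deriv ?_
      push_cast
      ring
    have hb : HasDerivAt (fun s => F (k s)) (F' (k t) * deriv k t) t :=
      (hFd (k t) (hk t)).comp t (hkd t).hasDerivAt
    exact ha.sub hb
  have h2 : deriv (fun s => (deriv k s)^2 - F (k s)) t = 0 := by
    rw [hg]; simp
  rw [h1.deriv] at h2
  have h3 : (2 * deriv (deriv k) t - F' (k t)) * deriv k t = 0 := by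
    linear_combination h2
  rcases mul_eq_zero.mp h3 with h | h
  · linarith
  · exact absurd h ht

lemma stmt6_boundary (k F F' : ℝ → ℝ) (hk : ∀ s, 0 < k s)
    (hkd : Differentiable ℝ k) (hk'd : Differentiable ℝ (deriv k))
    (hk''c : Continuous (deriv (deriv k)))
    (hodeF : ∀ s, (deriv k s)^2 = F (k s))
    (hFd : ∀ x, 0 < x → HasDerivAt F (F' x) x)
    (hF'c : Continuous (fun s => F' (k s)))
    (β : ℝ) (hβ2 : deriv (deriv k) β = 0)
    (hF'ne : F' (k β) ≠ 0)
    (hacc : ∀ ε > 0, ∃ t, |t - β| < ε ∧ deriv k t ≠ 0) : False := by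
  set C := |F' (k β)| with hC
  have hCpos : 0 < C := abs_pos.mpr hF'ne
  have h1 : ∀ᶠ t in nhds β, |deriv (deriv k) t| < C/4 := by
    have := Metric.tendsto_nhds.mp (hk''c.continuousAt (x := β)) (C/4) (by linarith)
    filter_upwards [this] with t ht
    rwa [Real.dist_eq, hβ2, sub_zero] at ht
  have h2 : ∀ᶠ t in nhds β, C/2 < |F' (k t)| := by
    have := Metric.tendsto_nhds.mp (hF'c.continuousAt (x := β)) (C/2) (by linarith)
    filter_upwards [this] with t ht
    rw [Real.dist_eq] at ht
    have h := abs_sub_abs_le_abs_sub (F' (k β)) (F' (k t))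
    rw [abs_sub_comm] at h
    linarith
  obtain ⟨ε, hε, hball⟩ := Metric.eventually_nhds_iff_ball.mp (h1.and h2)
  obtain ⟨t, htb, htne⟩ := hacc ε hε
  obtain ⟨ha, hb⟩ := hball t (by rwa [Metric.mem_ball, Real.dist_eq])
  rw [stmt6_chain k F F' hk hkd hk'd hodeF hFd t htne, abs_div] at ha
  rw [show |(2:ℝ)| = 2 by norm_num] at ha
  linarith


lemma stmt6_interior (k F F' : ℝ → ℝ) (hk : ∀ s, 0 < k s)
    (hksm : ContDiff ℝ (⊤ : ℕ∞) k)
    (hodeF : ∀ s, (deriv k s)^2 = F (k s))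
    (hFd : ∀ x, 0 < x → HasDerivAt F (F' x) x)
    (hF'c : Continuous (fun s => F' (k s)))
    (hF'ne0 : ∀ s, deriv k s = 0 → F' (k s) ≠ 0)
    (z w : ℝ) (hzw : z < w) (ε : ℝ) (hε : 0 < ε)
    (hz : ∀ t, |t - z| < ε → deriv k t = 0) (hw : deriv k w ≠ 0) : False := by
  have h1 : ContDiff ℝ (↑(⊤:ℕ∞)) k := hksm.of_le (by simp)
  have h2 := (contDiff_infty_iff_deriv.mp h1).2
  have h3 := (contDiff_infty_iff_deriv.mp h2).2
  have hkd : Differentiable ℝ k := hksm.differentiable (by simp)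
  have hk'd : Differentiable ℝ (deriv k) := h2.differentiable (by simp)
  have hk''c : Continuous (deriv (deriv k)) := h3.continuous
  have hk'c : Continuous (deriv k) := h2.continuous
  -- w is at distance ≥ ε from z
  have hwz : z + ε ≤ w := by
    by_contra hcon
    exact hw (hz w (by rw [abs_lt]; constructor <;> linarith))
  set T : Set ℝ := {t | t ≤ w ∧ ∀ s, z ≤ s → s ≤ t → deriv k s = 0} with hT
  have hT1 : z + ε/2 ∈ T := by
    refine ⟨by linarith, fun s h1 h2 => hz s ?_⟩
    rw [abs_lt]; constructor <;> linarith
  have hbdd : BddAbove T := ⟨w, fun t ht => ht.1⟩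
  have hTne : T.Nonempty := ⟨_, hT1⟩
  set β := sSup T with hβ
  have hβle : β ≤ w := csSup_le hTne (fun t ht => ht.1)
  have hβge : z + ε/2 ≤ β := le_csSup hbdd hT1
  have hzero : ∀ s, z ≤ s → s < β → deriv k s = 0 := by
    intro s hs1 hs2
    obtain ⟨t, htT, hst⟩ := exists_lt_of_lt_csSup hTne hs2
    exact htT.2 s hs1 hst.le
  have hβ1 : deriv k β = 0 := by
    by_contra hcon
    obtain ⟨δ, hδ, hb⟩ := Metric.eventually_nhds_iff_ball.mp
      (hk'c.continuousAt.eventually_ne hcon)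
    set s := β - min δ (ε/2) / 2 with hs
    have hmin : 0 < min δ (ε/2) := lt_min hδ (by linarith)
    have h5 : min δ (ε/2) ≤ δ := min_le_left _ _
    have h6 : min δ (ε/2) ≤ ε/2 := min_le_right _ _
    have : deriv k s ≠ 0 := hb s (by
      rw [Metric.mem_ball, Real.dist_eq, hs]
      rw [abs_lt]; constructor <;> [linarith; linarith])
    exact this (hzero s (by simp only [hs]; linarith) (by simp only [hs]; linarith))
  have hmid : ∀ s, z < s → s < β → deriv (deriv k) s = 0 := by
    intro s hs1 hs2
    have hev : deriv k =ᶠ[nhds s] (fun _ => (0:ℝ)) := by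
      have : Set.Ioo z β ∈ nhds s := Ioo_mem_nhds hs1 hs2
      filter_upwards [this] with t ht
      exact hzero t ht.1.le ht.2
    rw [hev.deriv_eq, deriv_const]
  have hβ2 : deriv (deriv k) β = 0 := by
    by_contra hcon
    obtain ⟨δ, hδ, hb⟩ := Metric.eventually_nhds_iff_ball.mp
      (hk''c.continuousAt.eventually_ne hcon)
    set s := β - min δ (ε/2) / 2 with hs
    have hmin : 0 < min δ (ε/2) := lt_min hδ (by linarith)
    have h5 : min δ (ε/2) ≤ δ := min_le_left _ _
    have h6 : min δ (ε/2) ≤ ε/2 := min_le_right _ _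
    have : deriv (deriv k) s ≠ 0 := hb s (by
      rw [Metric.mem_ball, Real.dist_eq, hs]
      rw [abs_lt]; constructor <;> [linarith; linarith])
    exact this (hmid s (by simp only [hs]; linarith) (by simp only [hs]; linarith))
  have hacc : ∀ ε' > 0, ∃ t, |t - β| < ε' ∧ deriv k t ≠ 0 := by
    intro ε' hε'
    by_contra hcon
    push_neg at hcon
    have hz' : ∀ t, |t - β| < ε' → deriv k t = 0 := hcon
    have hβw : β < w := lt_of_le_of_ne hβle (by
      intro h; rw [h] at hβ1; exact hw hβ1)
    set d := min ε' (w - β) with hd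
    have hdpos : 0 < d := lt_min hε' (by linarith)
    have hd1 : d ≤ ε' := min_le_left _ _
    have hd2 : d ≤ w - β := min_le_right _ _
    have ht0 : β + d/2 ∈ T := by
      refine ⟨by linarith, fun s hs1 hs2 => ?_⟩
      rcases lt_or_ge s β with h | h
      · exact hzero s hs1 h
      · exact hz' s (by rw [abs_lt]; constructor <;> linarith)
    have := le_csSup hbdd ht0
    linarith
  exact stmt6_boundary k F F' hk hkd hk'd hk''c hodeF hFd hF'c β hβ2
    (hF'ne0 β hβ1) hacc

lemma stmt6_dense (k F F' : ℝ → ℝ) (hk : ∀ s, 0 < k s)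
    (hksm : ContDiff ℝ (⊤ : ℕ∞) k)
    (hknc : ¬ ∀ s t, k s = k t)
    (hodeF : ∀ s, (deriv k s)^2 = F (k s))
    (hFd : ∀ x, 0 < x → HasDerivAt F (F' x) x)
    (hF'c : Continuous F')
    (hF'ne0 : ∀ s, deriv k s = 0 → F' (k s) ≠ 0) :
    ∀ z : ℝ, ∀ ε > 0, ∃ t, |t - z| < ε ∧ deriv k t ≠ 0 := by
  intro z ε hε
  by_contra hcon
  push_neg at hcon
  have hz : ∀ t, |t - z| < ε → deriv k t = 0 := hcon
  have hkc : Continuous k := hksm.continuous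
  obtain ⟨w, hw⟩ : ∃ w, deriv k w ≠ 0 := by
    by_contra hcon2
    push_neg at hcon2
    exact hknc (is_const_of_deriv_eq_zero (hksm.differentiable (by simp)) hcon2)
  have hwz : w ≠ z := by
    intro h; rw [h] at hw; exact hw (hz z (by simpa using hε))
  rcases hwz.lt_or_gt with h | h
  · -- w < z : reflect
    set k2 : ℝ → ℝ := fun s => k (-s) with hk2def
    have hder2 : ∀ s, deriv k2 s = -deriv k (-s) := fun s => deriv_comp_neg k s
    refine stmt6_interior k2 F F' (fun s => hk (-s))
      (hksm.comp contDiff_neg)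
      (fun s => by rw [hder2]; simpa using hodeF (-s))
      hFd (hF'c.comp (hkc.comp continuous_neg))
      (fun s hs => hF'ne0 (-s) (by rw [hder2 s] at hs; linarith))
      (-z) (-w) (by linarith) ε hε
      (fun t ht => by
        rw [hder2]
        rw [show t - -z = -(-t - z) by ring, abs_neg] at ht
        rw [hz (-t) ht]; ring)
      (by rw [hder2]; simpa using hw)
  · exact stmt6_interior k F F' hk hksm hodeF hFd (hF'c.comp hkc) hF'ne0
      z w h ε hε hz hw


set_option maxHeartbeats 1000000 in
theorem stmt6 (n : ℕ) (hn : 3 ≤ n) (lam : ℝ) (hlam : lam ≠ 0)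
    (c N₁ : ℝ → EuclideanSpace ℝ (Fin 2)) (k u v : ℝ → ℝ)
    (hc1 : ∀ s, ‖deriv c s‖ = 1) (hN1 : ∀ s, ‖N₁ s‖ = 1)
    (horth : ∀ s, ⟪deriv c s, N₁ s⟫ = 0)
    (hfr1 : ∀ s, deriv (deriv c) s = k s • N₁ s)
    (hfr2 : ∀ s, deriv N₁ s = -(k s) • deriv c s)
    (hk : ∀ s, 0 < k s) (hksm : ContDiff ℝ (⊤ : ℕ∞) k) (hcsm : ContDiff ℝ (⊤ : ℕ∞) c)
    (hknc : ¬ ∀ s t, k s = k t)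
    (hode : ∀ s, (deriv k s)^2 + (((n:ℝ)-1)/((n:ℝ)-2))^2 * (k s)^4
        - (((n:ℝ)-1)/lam)^2 * (k s) ^ ((2*(n:ℝ))/((n:ℝ)-1)) = 0)
    (hu : ∀ s, u s = lam * (k s) ^ (-(1:ℝ)/((n:ℝ)-1)))
    (hv : ∀ s, v s = (lam/((n:ℝ)-2)) * (k s) ^ (((n:ℝ)-2)/((n:ℝ)-1)))
    (e : ℝ → EuclideanSpace ℝ (Fin 2))
    (he : ∀ s, e s = deriv u s • deriv c s + v s • N₁ s) :
    (∀ s t, e s = e t) ∧ (∀ s, ‖e s‖ = 1) ∧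
      ∃ c₀ : EuclideanSpace ℝ (Fin 2), ∀ s,
        ⟪c s - c₀, e s⟫ = u s ∧
        k s * ⟪c s - c₀, e s⟫ = ((n:ℝ)-2) * v s ∧
        ((n:ℝ)-2) * v s = ((n:ℝ)-2) * ⟪e s, N₁ s⟫ := by
  have hN : (3:ℝ) ≤ (n:ℝ) := by exact_mod_cast hn
  set N : ℝ := (n:ℝ) with hNdef
  have hP1 : N - 1 ≠ 0 := by intro h; nlinarith
  have hQ1 : N - 2 ≠ 0 := by intro h; nlinarith
  set r : ℝ := -(1:ℝ)/(N-1) with hrdef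
  set q : ℝ := (N-2)/(N-1) with hqdef
  have hrne : r ≠ 0 := by
    rw [hrdef]; rw [div_ne_zero_iff]; exact ⟨by norm_num, hP1⟩
  -- basic smoothness facts
  have hkd : Differentiable ℝ k := hksm.differentiable (by simp)
  have hueq : u = fun y => lam * k y ^ r := funext hu
  have hveq : v = fun y => (lam/(N-2)) * k y ^ q := funext hv
  have hud : ∀ s, HasDerivAt u (lam * (deriv k s * r * k s ^ (r - 1))) s := by
    intro s
    rw [hueq]
    exact (((hkd s).hasDerivAt).rpow_const (Or.inl (hk s).ne')).const_mul lam
  have hvd : ∀ s, HasDerivAt v ((lam/(N-2)) * (deriv k s * q * k s ^ (q - 1))) s := by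
    intro s
    rw [hveq]
    exact (((hkd s).hasDerivAt).rpow_const (Or.inl (hk s).ne')).const_mul (lam/(N-2))
  have hdu : ∀ s, deriv u s = lam * (deriv k s * r * k s ^ (r - 1)) :=
    fun s => (hud s).deriv
  have hdv : ∀ s, deriv v s = (lam/(N-2)) * (deriv k s * q * k s ^ (q - 1)) :=
    fun s => (hvd s).deriv
  -- ODE in explicit form
  have hodeF : ∀ s, (deriv k s)^2
      = ((N-1)/lam)^2 * (k s) ^ (2*N/(N-1)) - ((N-1)/(N-2))^2 * (k s)^(4:ℕ) := by
    intro s; have := hode s; linarith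
  -- u'^2 + v^2 = 1
  have hPyth : ∀ s, (deriv u s)^2 + (v s)^2 = 1 := by
    intro s
    rw [hdu s, hv s]
    set x := k s with hxdef
    set d := deriv k s with hddef
    have hx : 0 < x := hk s
    have hd2 := hodeF s
    have h1 : (x ^ (r-1))^2 * x ^ (2*N/(N-1)) = 1 := by
      rw [sq, ← Real.rpow_add hx, ← Real.rpow_add hx,
        show (r-1) + (r-1) + 2*N/(N-1) = 0 by rw [hrdef]; field_simp; ring,
        Real.rpow_zero]
    have h2 : (x ^ (r-1))^2 * x^(4:ℕ) = (x ^ q)^2 := by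
      rw [sq, sq, ← Real.rpow_natCast x 4, ← Real.rpow_add hx, ← Real.rpow_add hx,
        ← Real.rpow_add hx]
      congr 1
      rw [hrdef, hqdef]; field_simp; ring
    calc (lam * (d * r * x ^ (r-1)))^2 + ((lam/(N-2)) * x ^ q)^2
        = lam^2*r^2*((x ^ (r-1))^2 * d^2) + (lam/(N-2))^2 * (x ^ q)^2 := by ring
      _ = lam^2*r^2*(((N-1)/lam)^2 * ((x ^ (r-1))^2 * x ^ (2*N/(N-1)))
            - ((N-1)/(N-2))^2 * ((x ^ (r-1))^2 * x^(4:ℕ))) + (lam/(N-2))^2 * (x ^ q)^2 := by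
          rw [hd2]; ring
      _ = lam^2*r^2*(((N-1)/lam)^2 - ((N-1)/(N-2))^2 * (x ^ q)^2) + (lam/(N-2))^2 * (x ^ q)^2 := by
          rw [h1, h2]; ring
      _ = 1 := by rw [hrdef]; field_simp; ring
  -- v' = -k u'
  have hvu : ∀ s, deriv v s = -(k s) * deriv u s := by
    intro s
    rw [hdu s, hdv s]
    set x := k s with hxdef
    set d := deriv k s with hddef
    have hx : 0 < x := hk s
    have hqr : q - 1 = r := by rw [hrdef, hqdef]; field_simp; norm_num
    have hxx : x * x ^ (r - 1) = x ^ r := by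
      nth_rewrite 1 [← Real.rpow_one x]
      rw [← Real.rpow_add hx]; congr 1; ring
    rw [hqr]
    have hc : (lam/(N-2)) * q = lam/(N-1) := by rw [hqdef]; field_simp
    calc (lam/(N-2)) * (d * q * x ^ r)
        = ((lam/(N-2)) * q) * d * x ^ r := by ring
      _ = (lam/(N-1)) * d * x ^ r := by rw [hc]
      _ = -x * (lam * (d * r * x ^ (r - 1))) := by
          rw [show -x * (lam * (d * r * x ^ (r - 1)))
              = (lam * (-r) * d) * (x * x ^ (r - 1)) by ring, hxx, hrdef]
          rw [div_eq_mul_inv, div_eq_mul_inv]; ring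
  -- k u = (N-2) v
  have hkuv : ∀ s, k s * u s = (N-2) * v s := by
    intro s
    rw [hu s, hv s]
    set x := k s with hxdef
    have hx : 0 < x := hk s
    have hxx : x * x ^ r = x ^ q := by
      nth_rewrite 1 [← Real.rpow_one x]
      rw [← Real.rpow_add hx]
      congr 1; rw [hrdef, hqdef]; field_simp; ring
    rw [show x * (lam * x ^ r) = lam * (x * x ^ r) by ring, hxx]
    field_simp
  -- density of {deriv k ≠ 0}
  have hdense0 : ∀ z : ℝ, ∀ ε > 0, ∃ t, |t - z| < ε ∧ deriv k t ≠ 0 := by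
    apply stmt6_dense k
      (fun x => ((N-1)/lam)^2 * x ^ (2*N/(N-1)) - ((N-1)/(N-2))^2 * x^(4:ℕ))
      (fun x => ((N-1)/lam)^2 * (2*N/(N-1) * x ^ (2*N/(N-1) - 1))
        - ((N-1)/(N-2))^2 * (4 * x^(3:ℕ)))
      hk hksm hknc hodeF
    · -- hFd
      intro x hx
      have h1 : HasDerivAt (fun y : ℝ => y ^ (2*N/(N-1)))
          (2*N/(N-1) * x ^ (2*N/(N-1) - 1)) x :=
        Real.hasDerivAt_rpow_const (Or.inl hx.ne')
      have h2 : HasDerivAt (fun y : ℝ => y ^ (4:ℕ)) (4 * x ^ (3:ℕ)) x := by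
        simpa using hasDerivAt_pow 4 x
      exact (h1.const_mul _).sub (h2.const_mul _)
    · -- continuity of F'
      have h0 : (0:ℝ) ≤ 2*N/(N-1) - 1 := by
        rw [sub_nonneg, le_div_iff₀ (by nlinarith : (0:ℝ) < N - 1)]; nlinarith
      have hc1 : Continuous fun x : ℝ => x ^ (2*N/(N-1) - 1) :=
        continuous_id.rpow_const (fun x => Or.inr h0)
      exact (continuous_const.mul (continuous_const.mul hc1)).sub
        (continuous_const.mul (continuous_const.mul (continuous_pow 3)))
    · -- F' nonzero at zeros of k'
      intro s hs
      set x := k s with hxdef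
      have hx : 0 < x := hk s
      have hFx : ((N-1)/lam)^2 * x ^ (2*N/(N-1)) - ((N-1)/(N-2))^2 * x^(4:ℕ) = 0 := by
        have := hodeF s; rw [hs] at this; simpa using this.symm
      have hxE1 : x ^ (2*N/(N-1) - 1) = x ^ (2*N/(N-1)) / x := by
        rw [Real.rpow_sub hx, Real.rpow_one]
      have hkey : ((N-1)/lam)^2 * (2*N/(N-1) * x ^ (2*N/(N-1) - 1))
          = (2*N/(N-1)) * (((N-1)/(N-2))^2 * x^(3:ℕ)) := by
        have hE : ((N-1)/lam)^2 * x ^ (2*N/(N-1)) = ((N-1)/(N-2))^2 * x^(4:ℕ) := by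
          linarith
        rw [hxE1, show ((N-1)/lam)^2 * (2*N/(N-1) * (x ^ (2*N/(N-1)) / x))
            = (2*N/(N-1)) * (((N-1)/lam)^2 * x ^ (2*N/(N-1))) / x by ring, hE]
        field_simp [hx.ne']
      rw [hkey]
      have hA : 0 < ((N-1)/(N-2))^2 * x^(3:ℕ) := by
        have : 0 < ((N-1)/(N-2))^2 := by positivity
        positivity
      have hE4 : 2*N/(N-1) < 4 := by
        rw [div_lt_iff₀ (by nlinarith : (0:ℝ) < N - 1)]; nlinarith
      nlinarith
  have hdenseSet : Dense {t : ℝ | deriv k t ≠ 0} := by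
    rw [Metric.dense_iff]
    intro x ρ hρ
    obtain ⟨t, h1, h2⟩ := hdense0 x ρ hρ
    exact ⟨t, by rw [Metric.mem_ball, Real.dist_eq]; exact h1, h2⟩
  -- smoothness of u, continuity of v
  have husm : ContDiff ℝ (↑(⊤:ℕ∞)) u := by
    rw [hueq]
    apply contDiff_const.mul
    rw [contDiff_iff_contDiffAt]
    intro s
    exact ((hksm.of_le (by simp)).contDiffAt).rpow_const_of_ne (hk s).ne'
  have hu'sm := (contDiff_infty_iff_deriv.mp husm).2
  have hu'd : Differentiable ℝ (deriv u) := hu'sm.differentiable (by simp)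
  have hu''c : Continuous (deriv (deriv u)) :=
    ((contDiff_infty_iff_deriv.mp hu'sm).2).continuous
  have hvcont : Continuous v := by
    rw [hveq]
    exact continuous_const.mul (hksm.continuous.rpow_const fun s => Or.inl (hk s).ne')
  -- u'' = k v on the dense set, hence everywhere
  have hkveq : ∀ t, deriv k t ≠ 0 → deriv (deriv u) t = k t * v t := by
    intro t ht
    have hu'ne : deriv u t ≠ 0 := by
      rw [hdu t]
      exact mul_ne_zero hlam (mul_ne_zero (mul_ne_zero ht hrne)
        (Real.rpow_pos_of_pos (hk t) _).ne')
    have hfun : (fun s => (deriv u s)^2 + (v s)^2) = fun _ => (1:ℝ) := funext hPyth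
    have hva : HasDerivAt v (deriv v t) t := by
      have h := hvd t; rwa [← hdv t] at h
    have hD : HasDerivAt (fun s => (deriv u s)^2 + (v s)^2)
        (2 * deriv u t * deriv (deriv u) t + 2 * v t * deriv v t) t := by
      have h1 := ((hu'd t).hasDerivAt).fun_pow 2
      have h2 := hva.fun_pow 2
      have := h1.fun_add h2
      refine this.congr_deriv ?_
      push_cast
      ring
    have h0 : deriv (fun s => (deriv u s)^2 + (v s)^2) t = 0 := by
      rw [hfun]; simp
    rw [hD.deriv, hvu t] at h0
    have h3 : (deriv (deriv u) t - k t * v t) * (2 * deriv u t) = 0 := by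
      linear_combination h0
    rcases mul_eq_zero.mp h3 with h | h
    · linarith
    · exact absurd h (by simpa using hu'ne)
  have hkv : ∀ s, deriv (deriv u) s = k s * v s := by
    have hEq : (fun s => deriv (deriv u) s) = fun s => k s * v s :=
      Continuous.ext_on hdenseSet hu''c (hksm.continuous.mul hvcont) hkveq
    exact fun s => congrFun hEq s
  -- N₁ differentiability and derivative facts
  have hcsm' : ContDiff ℝ (↑(⊤:ℕ∞)) c := hcsm.of_le (by simp)
  have hc2 := (contDiff_infty_iff_deriv.mp hcsm').2
  have hc3 := (contDiff_infty_iff_deriv.mp hc2).2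
  have hcd : Differentiable ℝ c := hcsm.differentiable (by simp)
  have hc'd : Differentiable ℝ (deriv c) := hc2.differentiable (by simp)
  have hc''d : Differentiable ℝ (deriv (deriv c)) := hc3.differentiable (by simp)
  have hN₁eq : N₁ = fun s => (k s)⁻¹ • deriv (deriv c) s := by
    funext s
    rw [hfr1 s, inv_smul_smul₀ (hk s).ne']
  have hN₁d : Differentiable ℝ N₁ := by
    rw [hN₁eq]
    exact (hkd.inv (fun s => (hk s).ne')).smul hc''d
  have hN₁has : ∀ s, HasDerivAt N₁ (-(k s) • deriv c s) s := by
    intro s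
    have h := (hN₁d s).hasDerivAt
    rwa [hfr2 s] at h
  have hc'has : ∀ s, HasDerivAt (deriv c) (k s • N₁ s) s := by
    intro s
    have h := (hc'd s).hasDerivAt
    rwa [hfr1 s] at h
  have hu'has : ∀ s, HasDerivAt (deriv u) (k s * v s) s := by
    intro s
    have h := (hu'd s).hasDerivAt
    rwa [hkv s] at h
  have hvhas : ∀ s, HasDerivAt v (-(k s) * deriv u s) s := by
    intro s
    have h := hvd s
    rw [← hdv s] at h
    rwa [hvu s] at h
  -- e is constant
  have heeq : e = fun s => deriv u s • deriv c s + v s • N₁ s := funext he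
  have he' : ∀ s, HasDerivAt e 0 s := by
    intro s
    rw [heeq]
    have H1 := (hu'has s).fun_smul (hc'has s)
    have H2 := (hvhas s).fun_smul (hN₁has s)
    have H := H1.fun_add H2
    refine H.congr_deriv ?_
    rw [smul_smul, smul_smul,
      show v s * -(k s) = -(k s * v s) by ring,
      show -(k s) * deriv u s = -(deriv u s * k s) by ring,
      neg_smul, neg_smul]
    abel
  have hconst : ∀ s t, e s = e t :=
    is_const_of_deriv_eq_zero (fun s => (he' s).differentiableAt)
      (fun s => (he' s).deriv)
  -- unit norm
  have hIcc : ∀ s, ⟪deriv c s, deriv c s⟫ = 1 := by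
    intro s; rw [real_inner_self_eq_norm_sq, hc1 s]; norm_num
  have hInn : ∀ s, ⟪N₁ s, N₁ s⟫ = 1 := by
    intro s; rw [real_inner_self_eq_norm_sq, hN1 s]; norm_num
  have hInc : ∀ s, ⟪N₁ s, deriv c s⟫ = 0 := by
    intro s; rw [real_inner_comm]; exact horth s
  have hinner_ee : ∀ s, ⟪e s, e s⟫ = 1 := by
    intro s
    rw [he s]
    simp only [inner_add_left, inner_add_right, real_inner_smul_left,
      real_inner_smul_right, hIcc s, hInn s, hInc s, horth s]
    have := hPyth s
    nlinarith [this]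
  have hnorm1 : ∀ s, ‖e s‖ = 1 := by
    intro s
    have h := hinner_ee s
    rw [real_inner_self_eq_norm_sq] at h
    nlinarith [norm_nonneg (e s)]
  -- inner products with the frame
  have hcE : ∀ s, ⟪deriv c s, e s⟫ = deriv u s := by
    intro s
    rw [he s]
    simp only [inner_add_right, real_inner_smul_right, hIcc s, horth s]
    ring
  have hEN : ∀ s, ⟪e s, N₁ s⟫ = v s := by
    intro s
    rw [he s]
    simp only [inner_add_left, real_inner_smul_left, horth s, hInn s]
    ring
  refine ⟨hconst, hnorm1, ?_⟩
  -- the translation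
  have hf' : ∀ s, HasDerivAt (fun t => ⟪c t, e 0⟫ - u t) 0 s := by
    intro s
    have h1 : HasDerivAt (fun t => ⟪c t, e 0⟫) (⟪deriv c s, e 0⟫) s := by
      have h := ((hcd s).hasDerivAt.inner ℝ (hasDerivAt_const s (e 0)))
      simpa using h
    have h2 := hud s
    rw [← hdu s] at h2
    have h3 := h1.fun_sub h2
    refine h3.congr_deriv ?_
    rw [show e 0 = e s from hconst 0 s, hcE s]
    ring
  have hfconst := is_const_of_deriv_eq_zero
    (fun s => (hf' s).differentiableAt) (fun s => (hf' s).deriv)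
  refine ⟨(⟪c 0, e 0⟫ - u 0) • e 0, fun s => ?_⟩
  have hfs : ⟪c s, e 0⟫ - u s = ⟪c 0, e 0⟫ - u 0 := hfconst s 0
  have hes : e s = e 0 := hconst s 0
  have hinner1 : ⟪c s - (⟪c 0, e 0⟫ - u 0) • e 0, e s⟫ = u s := by
    rw [inner_sub_left, hes, real_inner_smul_left, hinner_ee 0]
    linarith
  refine ⟨hinner1, ?_, ?_⟩
  · rw [hinner1]
    exact hkuv s
  · rw [hEN s]
end

section
/- Suppose u, v : I → R are smooth functions and c : I → R² is a unit-speed curve with curvature k₁ > 0 and unit normal N₁, such that e := u̇ ċ + v N₁ is a constant vector and k₁ u = (n-2) v with u > 0 and n ≥ 3. Then (n-1) k₁ u̇ + k̇₁ u = 0, hence u = λ k₁^(-1/(n-1)) for some constant λ ≠ 0. -/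
open Real
open scoped RealInnerProductSpace

/-!
STATEMENT 7.  If `u, v` are smooth, `c` is a unit-speed plane curve with
curvature `k₁ > 0` and unit normal `N₁` (Frenet equations `c'' = k₁N₁`,
`N₁' = -k₁ c'`), `e := u̇ ċ + v N₁` is a constant vector, `k₁ u = (n-2)v`
and `u > 0`, then `(n-1)k₁u̇ + k̇₁u = 0`, hence `u = λ k₁^{-1/(n-1)}` for
some constant `λ ≠ 0`.
-/
theorem stmt7 (n : ℕ) (hn : 3 ≤ n)
    (c N₁ : ℝ → EuclideanSpace ℝ (Fin 2)) (k₁ u v : ℝ → ℝ)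
    (e : EuclideanSpace ℝ (Fin 2))
    (hcsm : ContDiff ℝ (⊤ : ℕ∞) c) (hNsm : ContDiff ℝ (⊤ : ℕ∞) N₁)
    (husm : ContDiff ℝ (⊤ : ℕ∞) u) (hvsm : ContDiff ℝ (⊤ : ℕ∞) v) (hksm : ContDiff ℝ (⊤ : ℕ∞) k₁)
    (hc1 : ∀ s, ‖deriv c s‖ = 1) (hN1 : ∀ s, ‖N₁ s‖ = 1)
    (horth : ∀ s, ⟪deriv c s, N₁ s⟫ = 0)
    (hfr1 : ∀ s, deriv (deriv c) s = k₁ s • N₁ s)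
    (hfr2 : ∀ s, deriv N₁ s = -(k₁ s) • deriv c s)
    (hk : ∀ s, 0 < k₁ s) (hupos : ∀ s, 0 < u s)
    (he : ∀ s, deriv u s • deriv c s + v s • N₁ s = e)
    (hrel : ∀ s, k₁ s * u s = ((n:ℝ)-2) * v s) :
    (∀ s, ((n:ℝ)-1) * k₁ s * deriv u s + deriv k₁ s * u s = 0) ∧
      ∃ lam : ℝ, lam ≠ 0 ∧ ∀ s, u s = lam * (k₁ s) ^ (-(1:ℝ)/((n:ℝ)-1)) := by
  have key : ∀ f : ℝ → EuclideanSpace ℝ (Fin 2), ContDiff ℝ (⊤ : ℕ∞) f →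
      Differentiable ℝ (deriv f) := by
    intro f hf
    have h2 : ContDiff ℝ ((⊤:ℕ∞):WithTop ℕ∞) f := hf.of_le (by simp)
    exact ((contDiff_infty_iff_deriv.mp h2).2).differentiable (by simp)
  have key' : ∀ f : ℝ → ℝ, ContDiff ℝ (⊤ : ℕ∞) f → Differentiable ℝ (deriv f) := by
    intro f hf
    have h2 : ContDiff ℝ ((⊤:ℕ∞):WithTop ℕ∞) f := hf.of_le (by simp)
    exact ((contDiff_infty_iff_deriv.mp h2).2).differentiable (by simp)
  have hcd : Differentiable ℝ (deriv c) := key c hcsm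
  have hud : Differentiable ℝ (deriv u) := key' u husm
  have hNd : Differentiable ℝ N₁ := hNsm.differentiable (by simp)
  have hvd : Differentiable ℝ v := hvsm.differentiable (by simp)
  have hkd : Differentiable ℝ k₁ := hksm.differentiable (by simp)
  have hud0 : Differentiable ℝ u := husm.differentiable (by simp)
  -- derivative of e is zero
  have hder0 : ∀ s, deriv (fun t => deriv u t • deriv c t + v t • N₁ t) s = 0 := by
    intro s
    have : (fun t => deriv u t • deriv c t + v t • N₁ t) = fun _ => e := funext he
    rw [this, deriv_const]
  -- v' = -(k₁ u')
  have hv' : ∀ s, deriv v s = -(k₁ s * deriv u s) := by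
    intro s
    have h1 : deriv (fun t => deriv u t • deriv c t + v t • N₁ t) s =
        (deriv (deriv u) s • deriv c s + deriv u s • deriv (deriv c) s) +
        (deriv v s • N₁ s + v s • deriv N₁ s) := by
      rw [deriv_fun_add ((hud s).fun_smul (hcd s)) ((hvd s).fun_smul (hNd s)),
        deriv_fun_smul (hud s) (hcd s), deriv_fun_smul (hvd s) (hNd s)]
      abel
    have h0 := hder0 s
    rw [h1, hfr1, hfr2] at h0
    have h2 := congrArg (fun x => ⟪x, N₁ s⟫) h0
    simp only [inner_add_left, real_inner_smul_left, inner_zero_left,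
      real_inner_smul_left, horth s] at h2
    have hN2 : ⟪N₁ s, N₁ s⟫ = 1 := by
      rw [real_inner_self_eq_norm_sq, hN1 s]; norm_num
    rw [hN2] at h2
    nlinarith [h2]
  -- main ODE identity
  have hmain : ∀ s, ((n:ℝ)-1) * k₁ s * deriv u s + deriv k₁ s * u s = 0 := by
    intro s
    have h3 : deriv (fun t => k₁ t * u t) s = deriv (fun t => ((n:ℝ)-2) * v t) s := by
      congr 1; exact funext hrel
    rw [deriv_fun_mul (hkd s) (hud0 s), deriv_const_mul _ (hvd s)] at h3
    have h4 := hv' s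
    linear_combination h3 + ((n:ℝ)-2) * h4
  refine ⟨hmain, ?_⟩
  have hn1 : ((n:ℝ) - 1) ≠ 0 := by
    have : (3:ℝ) ≤ (n:ℝ) := by exact_mod_cast hn
    linarith
  set γ : ℝ := 1 / ((n:ℝ) - 1) with hγ
  -- F := u * k₁^γ is constant
  have hF : ∀ s, HasDerivAt (fun t => u t * (k₁ t) ^ γ) 0 s := by
    intro s
    have hk' : HasDerivAt (fun t => (k₁ t) ^ γ)
        (deriv k₁ s * γ * (k₁ s) ^ (γ - 1)) s := by
      have := ((hkd s).hasDerivAt).rpow_const (p := γ) (Or.inl (hk s).ne')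
      simpa using this
    have h := ((hud0 s).hasDerivAt).fun_mul hk'
    refine h.congr_deriv ?_
    symm
    have hpow : (k₁ s) ^ γ = k₁ s * (k₁ s) ^ (γ - 1) := by
      have h7 := Real.rpow_add_one (hk s).ne' (γ - 1)
      rw [sub_add_cancel] at h7
      rw [h7]; ring
    rw [hpow]
    have h5 := hmain s
    have hγ1 : γ * ((n:ℝ) - 1) = 1 := by
      rw [hγ]; field_simp
    linear_combination (-(γ * (k₁ s) ^ (γ - 1))) * h5 +
      (k₁ s * deriv u s * (k₁ s) ^ (γ - 1)) * hγ1
  have hconst : ∀ s, u s * (k₁ s) ^ γ = u 0 * (k₁ 0) ^ γ := by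
    intro s
    exact is_const_of_deriv_eq_zero (fun t => (hF t).differentiableAt)
      (fun t => (hF t).deriv) s 0
  refine ⟨u 0 * (k₁ 0) ^ γ, ?_, ?_⟩
  · exact ne_of_gt (mul_pos (hupos 0) (Real.rpow_pos_of_pos (hk 0) γ))
  · intro s
    have h6 := hconst s
    have hkp : (0:ℝ) < (k₁ s) ^ γ := Real.rpow_pos_of_pos (hk s) γ
    have hneg : (k₁ s) ^ (-(1:ℝ)/((n:ℝ)-1)) = ((k₁ s) ^ γ)⁻¹ := by
      rw [neg_div, ← Real.rpow_neg (hk s).le]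
    rw [hneg]
    field_simp
    linarith [h6]
end

section
/- There is no cone g(s,t) = t·c(s) over a unit-speed spherical curve c : I → S^(p+1) ⊂ R^(p+2) (with t > 0) that is an (n-2)-singular minimal surface with any unit density vector e, for n ≥ 3. More precisely, if the mean curvature vector of the cone is 2H_g = k₁ N₁ (where k₁ > 0 is the first Frenet curvature of c and N₁ its first Frenet normal), then the condition k₁ = ((n-2)/(t⟨c,e⟩)) ⟨e,N₁⟩ for all t > 0 leads to a contradiction. -/
open scoped RealInnerProductSpace

/-!
STATEMENT 8.  No cone `g(s,t) = t·c(s)` over a unit-speed spherical curve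
`c : I → S^{p+1} ⊂ ℝ^{p+2}` with first Frenet curvature `k₁ > 0` and first
Frenet normal `N₁` (so `2H_g = k₁N₁`) is an (n-2)-singular minimal surface:
the condition `k₁(s) = ((n-2)/(t⟨c(s),e⟩))⟨e,N₁(s)⟩` for all `t > 0`
(together with positivity of `φ = t⟨c,e⟩`) yields a contradiction.
-/
theorem stmt8 (n p : ℕ) (hn : 3 ≤ n)
    (c N₁ : ℝ → EuclideanSpace ℝ (Fin (p+2)))
    (e : EuclideanSpace ℝ (Fin (p+2))) (he : ‖e‖ = 1)
    (hc : ∀ s, ‖c s‖ = 1) (hc' : ∀ s, ‖deriv c s‖ = 1)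
    (k₁ : ℝ → ℝ) (hk : ∀ s, 0 < k₁ s)
    (hφ : ∀ s, ∀ t : ℝ, 0 < t → 0 < t * ⟪c s, e⟫)
    (hsm : ∀ s, ∀ t : ℝ, 0 < t →
      k₁ s = (((n:ℝ)-2) / (t * ⟪c s, e⟫)) * ⟪e, N₁ s⟫) :
    False := by
  have h1 := hsm 0 1 one_pos
  have h2 := hsm 0 2 two_pos
  have hx : (0:ℝ) < 1 * ⟪c 0, e⟫ := hφ 0 1 one_pos
  have hk0 := hk 0
  have hne : ⟪c 0, e⟫ ≠ 0 := by nlinarith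
  set x := ⟪c 0, e⟫ with hxdef
  set a := ⟪e, N₁ 0⟫ with hadef
  rw [h2] at h1
  rw [one_mul] at h1
  have : ((n:ℝ)-2) * a / x = 0 := by
    have := h1
    field_simp at this ⊢
    linarith
  have ha : ((n:ℝ)-2) * a = 0 := by
    field_simp at this
    linarith
  have hh : k₁ 0 * (2*x) = ((n:ℝ)-2) * a := by
    rw [h2]; field_simp
  rw [ha] at hh
  nlinarith
end

section
/- Define F : C^p → C^p by F(z) = ((1 + |⟨z,z⟩|²)/2 + ‖z‖²) e_p - z_p(⟨z̄,z̄⟩ z + z̄), where ⟨z,w⟩ = Σ zⱼwⱼ, ‖z‖² = Σ|zⱼ|², and e_p = (0,…,0,1). If z ∈ C^p satisfies F(z) = 0, |⟨z,z⟩| = 1, and z_p ≠ 0, then ‖z‖² + 1 = 2|z_p|² and z_p ⟨z̄,z̄⟩ = z̄_p, and moreover 2 z̄_p e_p = ⟨z̄,z̄⟩ z + z̄. -/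
open Complex ComplexConjugate

/-- The C-bilinear inner product `⟨z,w⟩ = Σ zⱼwⱼ` on `ℂ^{m+1}`. -/
noncomputable def bilin {m : ℕ} (z w : Fin (m+1) → ℂ) : ℂ := ∑ j, z j * w j

/-- The map `F(z) = ((1+|⟨z,z⟩|²)/2 + ‖z‖²) e_p - z_p(⟨z̄,z̄⟩ z + z̄)`
on `ℂ^{m+1}` (`p = m+1`, last index `Fin.last m`). -/
noncomputable def Fmap (m : ℕ) (z : Fin (m+1) → ℂ) : Fin (m+1) → ℂ := fun j =>
  (((1 + ‖bilin z z‖^2)/2 + ∑ i, Complex.normSq (z i) : ℝ) : ℂ)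
      * (if j = Fin.last m then 1 else 0)
    - z (Fin.last m) * (bilin (fun i => conj (z i)) (fun i => conj (z i)) * z j + conj (z j))

/-- if `F(z) = 0`, `|⟨z,z⟩| = 1` and `z_p ≠ 0`, then
`‖z‖² + 1 = 2|z_p|²`, `z_p⟨z̄,z̄⟩ = z̄_p`, and `2z̄_p e_p = ⟨z̄,z̄⟩z + z̄`. -/
theorem stmt10 (m : ℕ) (z : Fin (m+1) → ℂ)
    (hF : ∀ j, Fmap m z j = 0)
    (habs : ‖bilin z z‖ = 1)
    (hzp : z (Fin.last m) ≠ 0) :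
    ((∑ i, Complex.normSq (z i)) + 1 = 2 * Complex.normSq (z (Fin.last m))) ∧
    (z (Fin.last m) * bilin (fun i => conj (z i)) (fun i => conj (z i))
        = conj (z (Fin.last m))) ∧
    (∀ j, 2 * conj (z (Fin.last m)) * (if j = Fin.last m then 1 else 0)
        = bilin (fun i => conj (z i)) (fun i => conj (z i)) * z j + conj (z j)) := by
  set c := z (Fin.last m) with hc
  set b := bilin (fun i => conj (z i)) (fun i => conj (z i)) with hb
  set N : ℝ := ∑ i, Complex.normSq (z i) with hN
  have habsb : ‖b‖ = 1 := by
    have : b = conj (bilin z z) := by simp [bilin, hb, map_sum]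
    rw [this, Complex.norm_conj, habs]
  have hNnonneg : 0 ≤ N := Finset.sum_nonneg fun i _ => Complex.normSq_nonneg _
  have hFp : ((1 + N : ℝ) : ℂ) = c * (b * c + conj c) := by
    have h := hF (Fin.last m)
    rw [Fmap] at h
    rw [sub_eq_zero] at h
    simp only [if_pos rfl, habs, one_pow, mul_one, ← hc, ← hb, ← hN] at h
    rw [← h]; norm_num
  -- hFp : ((1+1^2)/2 + N : ℝ) = c * (b * c + conj c)
  have key : c * c * b = ((1 + N - Complex.normSq c : ℝ) : ℂ) := by
    have hcc : c * conj c = (Complex.normSq c : ℂ) := Complex.mul_conj c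
    push_cast
    push_cast at hFp
    linear_combination -hFp - hcc
  -- r := 1 + N - normSq c; |r| = normSq c
  have habsr : |1 + N - Complex.normSq c| = Complex.normSq c := by
    have := congrArg (‖·‖) key
    rw [norm_mul, norm_mul, habsb, mul_one, Complex.norm_real, Real.norm_eq_abs] at this
    rw [← this, ← Complex.sq_norm, sq]
  have hr : 1 + N - Complex.normSq c = Complex.normSq c := by
    rcases abs_eq (Complex.normSq_nonneg c) |>.mp habsr with h | h
    · exact h
    · exfalso; nlinarith
  have part1 : N + 1 = 2 * Complex.normSq c := by linarith
  have part2 : c * b = conj c := by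
    have : c * (c * b) = c * conj c := by
      rw [← mul_assoc, key, hr, Complex.mul_conj]
    exact mul_left_cancel₀ hzp this
  refine ⟨part1, part2, fun j => ?_⟩
  by_cases hj : j = Fin.last m
  · subst hj
    rw [if_pos rfl]
    rw [mul_comm b c, part2]; ring
  · simp only [if_neg hj, mul_zero]
    have hFj := hF j
    rw [Fmap] at hFj
    simp only [if_neg hj, mul_zero, zero_sub, neg_eq_zero, ← hc, ← hb] at hFj
    rcases mul_eq_zero.mp hFj with h | h
    · exact absurd h hzp
    · exact h.symm
end
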